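/- Let ℓ₁(𝐬) = 2s₁+s₂+s₃, ℓ₂(𝐬) = s₁+2s₂+s₃, ℓ₃(𝐬) = s₁+s₂+2s₃ in ℚ[s₁,s₂,s₃], with corresponding linear forms ℓᵢ(c) on ℤ³, and let 𝔞 be the ideal generated by g_c = ∏_{j: c_j<0} C(s_j,-c_j) · ∏_{i: ℓ_i(c)>0} C(ℓ_i(𝐬)+ℓ_i(c), ℓ_i(c)) over all c ∈ ℤ³ with Σc_i = 1, where C(u,m) = u(u-1)⋯(u-m+1)/m!. Then (t+3/4)(t+5/4)(t+3/2)(t+1)³ evaluated at t = s₁+s₂+s₃ belongs to 𝔞. -/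
import Mathlib


open MvPolynomial

/-- The binomial coefficient polynomial `C(u,m) = u(u-1)⋯(u-m+1)/m!`. -/
noncomputable def binom {σ : Type*} (u : MvPolynomial σ ℚ) (m : ℕ) : MvPolynomial σ ℚ :=
  ((m.factorial : ℚ)⁻¹) • ∏ i ∈ Finset.range m, (u - (i : MvPolynomial σ ℚ))

/-- `ℓ_k(𝐬) = s_k + (s₁+s₂+s₃)` in `ℚ[s₁,s₂,s₃]`, i.e. `ℓ₁ = 2s₁+s₂+s₃` etc. -/
noncomputable def ellS (k : Fin 3) : MvPolynomial (Fin 3) ℚ := X k + ∑ j, X j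

/-- `ℓ_k(c) = c_k + (c₁+c₂+c₃)` on `ℤ³`. -/
def ellZ (k : Fin 3) (c : Fin 3 → ℤ) : ℤ := c k + ∑ j, c j

/-- `g_c = ∏_{j : c_j<0} C(s_j,-c_j) · ∏_{i : ℓ_i(c)>0} C(ℓ_i(𝐬)+ℓ_i(c), ℓ_i(c))`. -/
noncomputable def gc (c : Fin 3 → ℤ) : MvPolynomial (Fin 3) ℚ :=
  (∏ j ∈ Finset.univ.filter (fun j => c j < 0), binom (X j) (-(c j)).toNat) *
  (∏ i ∈ Finset.univ.filter (fun i => 0 < ellZ i c),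
    binom (ellS i + ((ellZ i c).toNat : MvPolynomial (Fin 3) ℚ)) (ellZ i c).toNat)

/-- The Bernstein–Sato ideal `𝔞` generated by the `g_c` with `∑ c_i = 1`. -/
noncomputable def af : Ideal (MvPolynomial (Fin 3) ℚ) :=
  Ideal.span {p | ∃ c : Fin 3 → ℤ, (∑ i, c i) = 1 ∧ p = gc c}

set_option maxHeartbeats 4000000 in
theorem stmt_14 :
    ((∑ i, X i) + C (3/4 : ℚ)) * ((∑ i, X i) + C (5/4 : ℚ)) * ((∑ i, X i) + C (3/2 : ℚ)) *
      ((∑ i, X i) + 1) ^ 3 ∈ af := by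
  have key : ((∑ i, X i) + C (3/4 : ℚ)) * ((∑ i, X i) + C (5/4 : ℚ)) * ((∑ i, X i) + C (3/2 : ℚ)) *
      ((∑ i, X i) + 1) ^ 3 =
      (C (3/32 : ℚ)) * gc ![(-1 : ℤ), (-1 : ℤ), (3 : ℤ)] +
      (C (2091/128 : ℚ) + C (237/32 : ℚ) * X 2 + C (525/32 : ℚ) * X 1 + C (6 : ℚ) * X 0) * gc ![(-1 : ℤ), (0 : ℤ), (2 : ℤ)] +
      (C (-489/32 : ℚ) + C (-581/64 : ℚ) * X 2 + C (-205/64 : ℚ) * X 1) * gc ![(-1 : ℤ), (1 : ℤ), (1 : ℤ)] +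
      (C (15/128 : ℚ) + C (3/16 : ℚ) * X 2) * gc ![(-1 : ℤ), (2 : ℤ), (0 : ℤ)] +
      (C (3/32 : ℚ)) * gc ![(-1 : ℤ), (3 : ℤ), (-1 : ℤ)] +
      (C (-369/128 : ℚ) + C (-141/64 : ℚ) * X 2 + C (-231/64 : ℚ) * X 1 + C (-45/16 : ℚ) * X 0) * gc ![(0 : ℤ), (-1 : ℤ), (2 : ℤ)] +
      (C (5/4 : ℚ) + C (51/64 : ℚ) * X 2 + C (1/8 : ℚ) * X 2 ^ 2 + C (63/16 : ℚ) * X 1 + C (259/128 : ℚ) * X 1 * X 2 + C (205/128 : ℚ) * X 1 ^ 2 + C (37/64 : ℚ) * X 0) * gc ![(0 : ℤ), (0 : ℤ), (1 : ℤ)] +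
      (C (-5/64 : ℚ) * X 2 + C (3/128 : ℚ) * X 2 ^ 2 + C (-5/64 : ℚ) * X 1 + C (-27/128 : ℚ) * X 1 * X 2) * gc ![(0 : ℤ), (1 : ℤ), (0 : ℤ)] +
      (C (-9/128 : ℚ) + C (3/16 : ℚ) * X 2) * gc ![(0 : ℤ), (2 : ℤ), (-1 : ℤ)] +
      (C (47/64 : ℚ) + C (17/32 : ℚ) * X 2) * gc ![(1 : ℤ), (-1 : ℤ), (1 : ℤ)] +
      (C (5/32 : ℚ) + C (37/64 : ℚ) * X 2 + C (21/32 : ℚ) * X 2 ^ 2) * gc ![(1 : ℤ), (0 : ℤ), (0 : ℤ)] +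
      (C (3/64 : ℚ) + C (1/32 : ℚ) * X 2) * gc ![(1 : ℤ), (1 : ℤ), (-1 : ℤ)] +
      (C (15/128 : ℚ) + C (3/16 : ℚ) * X 2) * gc ![(2 : ℤ), (-1 : ℤ), (0 : ℤ)] +
      (C (-9/128 : ℚ) + C (3/16 : ℚ) * X 2) * gc ![(2 : ℤ), (0 : ℤ), (-1 : ℤ)] +
      (C (3/32 : ℚ)) * gc ![(3 : ℤ), (-1 : ℤ), (-1 : ℤ)] := by
    apply MvPolynomial.funext
    intro x
    simp only [gc, binom, ellS, ellZ, Finset.prod_filter, Fin.prod_univ_three,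
      Fin.sum_univ_three, Matrix.cons_val_zero, Matrix.cons_val_one, Matrix.head_cons,
      Matrix.cons_val_two, Matrix.tail_cons, map_mul, map_add, map_sub, map_pow,
      smul_eval, eval_X, eval_C, map_prod, map_one]
    norm_num [show ((1:ℤ).toNat)=1 from rfl, show ((2:ℤ).toNat)=2 from rfl, show ((3:ℤ).toNat)=3 from rfl, show ((4:ℤ).toNat)=4 from rfl, Finset.prod_range_succ, Finset.prod_range_zero, Nat.factorial]
    ring
  rw [key]
  have h0 : gc ![(-1 : ℤ), (-1 : ℤ), (3 : ℤ)] ∈ af := Ideal.subset_span ⟨_, by decide, rfl⟩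
  have h1 : gc ![(-1 : ℤ), (0 : ℤ), (2 : ℤ)] ∈ af := Ideal.subset_span ⟨_, by decide, rfl⟩
  have h2 : gc ![(-1 : ℤ), (1 : ℤ), (1 : ℤ)] ∈ af := Ideal.subset_span ⟨_, by decide, rfl⟩
  have h3 : gc ![(-1 : ℤ), (2 : ℤ), (0 : ℤ)] ∈ af := Ideal.subset_span ⟨_, by decide, rfl⟩
  have h4 : gc ![(-1 : ℤ), (3 : ℤ), (-1 : ℤ)] ∈ af := Ideal.subset_span ⟨_, by decide, rfl⟩
  have h5 : gc ![(0 : ℤ), (-1 : ℤ), (2 : ℤ)] ∈ af := Ideal.subset_span ⟨_, by decide, rfl⟩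
  have h6 : gc ![(0 : ℤ), (0 : ℤ), (1 : ℤ)] ∈ af := Ideal.subset_span ⟨_, by decide, rfl⟩
  have h7 : gc ![(0 : ℤ), (1 : ℤ), (0 : ℤ)] ∈ af := Ideal.subset_span ⟨_, by decide, rfl⟩
  have h8 : gc ![(0 : ℤ), (2 : ℤ), (-1 : ℤ)] ∈ af := Ideal.subset_span ⟨_, by decide, rfl⟩
  have h9 : gc ![(1 : ℤ), (-1 : ℤ), (1 : ℤ)] ∈ af := Ideal.subset_span ⟨_, by decide, rfl⟩
  have h10 : gc ![(1 : ℤ), (0 : ℤ), (0 : ℤ)] ∈ af := Ideal.subset_span ⟨_, by decide, rfl⟩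
  have h11 : gc ![(1 : ℤ), (1 : ℤ), (-1 : ℤ)] ∈ af := Ideal.subset_span ⟨_, by decide, rfl⟩
  have h12 : gc ![(2 : ℤ), (-1 : ℤ), (0 : ℤ)] ∈ af := Ideal.subset_span ⟨_, by decide, rfl⟩
  have h13 : gc ![(2 : ℤ), (0 : ℤ), (-1 : ℤ)] ∈ af := Ideal.subset_span ⟨_, by decide, rfl⟩
  have h14 : gc ![(3 : ℤ), (-1 : ℤ), (-1 : ℤ)] ∈ af := Ideal.subset_span ⟨_, by decide, rfl⟩
  exact Ideal.add_mem _ (Ideal.add_mem _ (Ideal.add_mem _ (Ideal.add_mem _ (Ideal.add_mem _ (Ideal.add_mem _ (Ideal.add_mem _ (Ideal.add_mem _ (Ideal.add_mem _ (Ideal.add_mem _ (Ideal.add_mem _ (Ideal.add_mem _ (Ideal.add_mem _ (Ideal.add_mem _ (Ideal.mul_mem_left _ _ h0) (Ideal.mul_mem_left _ _ h1)) (Ideal.mul_mem_left _ _ h2)) (Ideal.mul_mem_left _ _ h3)) (Ideal.mul_mem_left _ _ h4)) (Ideal.mul_mem_left _ _ h5)) (Ideal.mul_mem_left _ _ h6))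 (Ideal.mul_mem_left _ _ h7)) (Ideal.mul_mem_left _ _ h8)) (Ideal.mul_mem_left _ _ h9)) (Ideal.mul_mem_left _ _ h10)) (Ideal.mul_mem_left _ _ h11)) (Ideal.mul_mem_left _ _ h12)) (Ideal.mul_mem_left _ _ h13)) (Ideal.mul_mem_left _ _ h14)
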